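/- arXiv:1802.09588 — 5 statements merged into one kernel-verified Lean document; each statement's English description precedes it below -/
import Mathlib

section
/- Let d ≥ 1, n ≥ 1 and N ≥ 2n+1 be integers, let p be a d-variate trigonometric polynomial of degree at most n, and set α = 2n/N. Then for every θ ∈ ℝ^d, |p(θ)| ≤ (1 − α)^{−d/2} · max_{θ_k ∈ Θ_N^d} |p(θ_k)|. -/
/-!
Let `L = N - 2n` and `E_q(t) = Σ_{a<q} e^{iat}`. The de la Vallée-Poussin kernel
`K(t) = e^{-i(N-n-1)t} E_L(t) E_N(t) / L` has Fourier coefficients `1` on `[-n, n]` and `0` outside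
`(-(N-n), N-n)`, so discrete orthogonality on the `N`-point grid gives the interpolation formula
`q(t) = N⁻¹ Σ_k q(t_k) K(t - t_k)` for univariate trigonometric polynomials of degree `≤ n`;
its tensor product reproduces `p` from its grid values. By discrete Parseval,
`Σ_k |E_q(t - t_k)|² = N q` for `q ≤ N`, so Cauchy–Schwarz bounds the Lebesgue constant
`N⁻¹ Σ_k |K(t - t_k)|` by `√(N / L) = (1 - α)^{-1/2}`, one factor per coordinate.
-/

/-- The uniform sampling grid point in `[0, 2π]^d` indexed by `k ∈ {0,…,N−1}^d`. -/
noncomputable def trigGrid (N : ℕ) {d : ℕ} (k : Fin d → Fin N) : Fin d → ℝ :=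
  fun i => 2 * Real.pi * (k i : ℝ) / N

/-- `p : ℝ^d → ℂ` is a `d`-variate trigonometric polynomial of degree at most `n`. -/
noncomputable def IsTrigPoly (d n : ℕ) (p : (Fin d → ℝ) → ℂ) : Prop :=
  ∃ c : (Fin d → ℤ) → ℂ, ∀ θ : Fin d → ℝ,
    p θ = ∑ k ∈ Fintype.piFinset (fun _ : Fin d => Finset.Icc (-(n : ℤ)) (n : ℤ)),
      c k * Complex.exp (Complex.I * ((∑ i, (k i : ℝ) * θ i : ℝ) : ℂ))

/-- The univariate Dirichlet kernel `D_l(t) = Σ_{k=−l}^{l} exp(i k t)`. -/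
noncomputable def dirichletKer (l : ℕ) (t : ℝ) : ℂ :=
  ∑ k ∈ Finset.Icc (-(l : ℤ)) (l : ℤ), Complex.exp (Complex.I * (k : ℂ) * (t : ℂ))

/-- The univariate de la Vallée-Poussin kernel `D_{n,m}(t) = (1/(m−n)) Σ_{l=n}^{m−1} D_l(t)`. -/
noncomputable def vpKer (n m : ℕ) (t : ℝ) : ℂ :=
  (1 / ((m : ℂ) - (n : ℂ))) * ∑ l ∈ Finset.Ico n m, dirichletKer l t

open Finset Complex
open scoped Real

noncomputable def expI (x : ℝ) : ℂ := exp (I * x)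

lemma expI_add (x y : ℝ) : expI (x + y) = expI x * expI y := by
  simp only [expI, ofReal_add, mul_add, exp_add]

lemma expI_neg (x : ℝ) : expI (-x) = starRingEnd ℂ (expI x) := by
  simp only [expI, ← exp_conj, map_mul, conj_I, conj_ofReal, ofReal_neg, mul_neg, neg_mul]

lemma norm_expI (x : ℝ) : ‖expI x‖ = 1 := by
  rw [expI, mul_comm]
  exact norm_exp_ofReal_mul_I x

lemma expI_sum {ι : Type*} (s : Finset ι) (f : ι → ℝ) :
    expI (∑ i ∈ s, f i) = ∏ i ∈ s, expI (f i) := by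
  simp only [expI, ofReal_sum, mul_sum, exp_sum]

noncomputable def gridAngle (N : ℕ) (k : Fin N) : ℝ := 2 * π * k / N

lemma trigGrid_apply {N d : ℕ} (k : Fin d → Fin N) (i : Fin d) :
    trigGrid N k i = gridAngle N (k i) := rfl

lemma sum_expI_mul_gridAngle {N : ℕ} (hN : N ≠ 0) (j : ℤ) :
    ∑ k : Fin N, expI (j * gridAngle N k) = if (N : ℤ) ∣ j then (N : ℂ) else 0 := by
  set ζ := exp (2 * π * I / N)
  have hζ : IsPrimitiveRoot ζ N := isPrimitiveRoot_exp N hN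
  have hpow : ∀ k : Fin N, expI (j * gridAngle N k) = (ζ ^ j) ^ (k : ℕ) := by
    intro k
    rw [← exp_int_mul, ← exp_nat_mul, expI, gridAngle]
    push_cast
    ring_nf
  simp_rw [hpow]
  rw [Fin.sum_univ_eq_sum_range (fun k => (ζ ^ j) ^ k) N]
  split_ifs with hj
  · simp [(hζ.zpow_eq_one_iff_dvd j).mpr hj]
  · have hζN : (ζ ^ j) ^ N = 1 := by
      rw [← zpow_natCast, ← zpow_mul, mul_comm, zpow_mul, zpow_natCast, hζ.pow_eq_one,
        one_zpow]
    rw [geom_sum_eq (mt (hζ.zpow_eq_one_iff_dvd j).mp hj), hζN, sub_self, zero_div]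

lemma sum_expI_mul_gridAngle_mul_expI {N : ℕ} {j m : ℤ} (h : |j - m| < N) (t : ℝ) :
    ∑ k : Fin N, expI (j * gridAngle N k) * expI (m * (t - gridAngle N k))
      = if j = m then N * expI (m * t) else 0 := by
  have hN : N ≠ 0 := by rintro rfl; simp at h; linarith [abs_nonneg (j - m)]
  have hterm : ∀ k : Fin N, expI (j * gridAngle N k) * expI (m * (t - gridAngle N k))
      = expI (m * t) * expI ((j - m : ℤ) * gridAngle N k) := by
    intro k
    rw [← expI_add, ← expI_add]
    push_cast
    ring_nf
  simp_rw [hterm]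
  rw [← mul_sum, sum_expI_mul_gridAngle hN]
  have hdvd : (N : ℤ) ∣ j - m ↔ j = m :=
    ⟨fun hd => sub_eq_zero.mp (Int.eq_zero_of_abs_lt_dvd hd h), fun he => by simp [he]⟩
  simp only [hdvd]
  split_ifs <;> ring

noncomputable def geomExp (q : ℕ) (t : ℝ) : ℂ := ∑ a ∈ range q, expI (a * t)

lemma sum_norm_sq_geomExp {q N : ℕ} (hq : q ≤ N) (t : ℝ) :
    ∑ k : Fin N, ‖geomExp q (t - gridAngle N k)‖ ^ 2 = N * q := by
  apply ofReal_injective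
  push_cast
  have hsq : ∀ s : ℝ, (‖geomExp q s‖ : ℂ) ^ 2
      = ∑ a ∈ range q, ∑ b ∈ range q, expI (-(b * s)) * expI (a * s) := by
    intro s
    rw [← mul_conj', geomExp, map_sum, sum_mul_sum]
    refine sum_congr rfl fun a _ => sum_congr rfl fun b _ => ?_
    rw [expI_neg, mul_comm]
  have horth : ∀ a ∈ range q, ∑ b ∈ range q, ∑ k : Fin N,
      expI (-(b * (t - gridAngle N k))) * expI (a * (t - gridAngle N k)) = N := by
    intro a ha
    have hN : 0 < N := by simp only [mem_range] at ha; omega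
    have hterm : ∀ (b : ℕ) (k : Fin N),
        expI (-(b * (t - gridAngle N k))) * expI (a * (t - gridAngle N k))
          = expI (-(b * t))
            * (expI ((b : ℤ) * gridAngle N k) * expI ((a : ℤ) * (t - gridAngle N k))) := by
      intro b k
      simp only [← expI_add]
      push_cast
      ring_nf
    simp_rw [hterm, ← mul_sum]
    rw [sum_eq_single a]
    · rw [sum_expI_mul_gridAngle_mul_expI (by simpa using hN), if_pos rfl,
        mul_left_comm, ← expI_add]
      simp [expI]
    · intro b hb hba
      rw [sum_expI_mul_gridAngle_mul_expI, if_neg (by exact_mod_cast hba), mul_zero]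
      simp only [mem_range] at ha hb
      rw [abs_lt]
      constructor <;> omega
    · exact fun h => absurd ha h
  simp_rw [hsq]
  rw [sum_comm, sum_congr rfl fun a _ => sum_comm, sum_congr rfl horth, sum_const, card_range,
    nsmul_eq_mul, mul_comm]

-- Of the exponents `c, …, c + N - 1`, only `j` survives the grid sum.
lemma sum_expI_mul_shifted_geomExp {N : ℕ} {c j : ℤ} (hcj : c ≤ j) (hjc : j < c + N)
    (t : ℝ) :
    ∑ k : Fin N, expI (j * gridAngle N k)
        * (expI (c * (t - gridAngle N k)) * geomExp N (t - gridAngle N k))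
      = N * expI (j * t) := by
  have hshift : ∀ s : ℝ,
      expI (c * s) * geomExp N s = ∑ a ∈ range N, expI ((a + c : ℤ) * s) := by
    intro s
    rw [geomExp, mul_sum]
    refine sum_congr rfl fun a _ => ?_
    rw [← expI_add]
    push_cast
    ring_nf
  have hj : (((j - c).toNat : ℕ) : ℤ) + c = j := by omega
  simp_rw [hshift, mul_sum]
  rw [sum_comm, sum_eq_single (j - c).toNat]
  · rw [sum_expI_mul_gridAngle_mul_expI (by rw [hj, sub_self, abs_zero]; omega), if_pos hj.symm,
      hj]
  · intro a ha hne
    rw [sum_expI_mul_gridAngle_mul_expI, if_neg (by omega)]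
    simp only [mem_range] at ha
    rw [abs_lt]
    constructor <;> omega
  · intro h
    exact absurd (mem_range.mpr (by omega)) h

/-- The de la Vallée-Poussin kernel `vpKer n (N - n)`, in factored form. -/
noncomputable def vpKernel (n N : ℕ) (t : ℝ) : ℂ :=
  expI (-((N - n - 1 : ℕ) : ℤ) * t) * geomExp (N - 2 * n) t * geomExp N t / (N - 2 * n : ℕ)

lemma sum_expI_mul_vpKernel {n N : ℕ} (hN : 2 * n < N) {j : ℤ} (hj : |j| ≤ n) (t : ℝ) :
    ∑ k : Fin N, expI (j * gridAngle N k) * vpKernel n N (t - gridAngle N k)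
      = N * expI (j * t) := by
  have hkernel : ∀ s : ℝ, vpKernel n N s = (∑ b ∈ range (N - 2 * n),
      expI (((b - (N - n - 1 : ℕ) : ℤ) : ℝ) * s) * geomExp N s) / (N - 2 * n : ℕ) := by
    intro s
    rw [vpKernel, geomExp, mul_sum (range (N - 2 * n)), sum_mul]
    congr 1
    refine sum_congr rfl fun b _ => ?_
    rw [← expI_add]
    push_cast
    ring_nf
  have hL : ((N - 2 * n : ℕ) : ℂ) ≠ 0 := by exact_mod_cast (by omega : N - 2 * n ≠ 0)
  rw [abs_le] at hj
  simp_rw [hkernel, mul_div_assoc', ← sum_div, mul_sum]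
  rw [sum_comm, sum_congr rfl fun b hb => sum_expI_mul_shifted_geomExp (by simp at hb; omega)
    (by simp at hb; omega) t, sum_const, card_range, nsmul_eq_mul, mul_div_cancel_left₀ _ hL]

lemma sum_norm_vpKernel_le {n N : ℕ} (hN : 2 * n < N) (t : ℝ) :
    ∑ k : Fin N, ‖vpKernel n N (t - gridAngle N k)‖ ≤ N * √(N / (N - 2 * n)) := by
  set L : ℕ := N - 2 * n with hLdef
  have hLpos : (0 : ℝ) < L := by exact_mod_cast (by omega : 0 < L)
  have hLcast : (L : ℝ) = N - 2 * n := by rw [hLdef, Nat.cast_sub hN.le]; push_cast; ring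
  have hnorm : ∀ s : ℝ, ‖vpKernel n N s‖ = ‖geomExp N s‖ * ‖geomExp L s‖ / L := by
    intro s
    rw [vpKernel, norm_div, norm_mul, norm_mul, norm_expI, one_mul, norm_natCast, mul_comm]
  have hsqrt : √((N : ℝ) * L) = √(N / L) * L := by
    rw [show (N : ℝ) * L = N / L * L ^ 2 by field_simp, Real.sqrt_mul (by positivity),
      Real.sqrt_sq hLpos.le]
  calc ∑ k : Fin N, ‖vpKernel n N (t - gridAngle N k)‖
      = (∑ k : Fin N, ‖geomExp N (t - gridAngle N k)‖ * ‖geomExp L (t - gridAngle N k)‖)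
          / L := by
        simp_rw [hnorm, sum_div]
    _ ≤ √(∑ k : Fin N, ‖geomExp N (t - gridAngle N k)‖ ^ 2)
          * √(∑ k : Fin N, ‖geomExp L (t - gridAngle N k)‖ ^ 2) / L := by
        gcongr
        exact Real.sum_mul_le_sqrt_mul_sqrt _ _ _
    _ = N * √(N / (N - 2 * n)) := by
        rw [sum_norm_sq_geomExp le_rfl, sum_norm_sq_geomExp (by omega),
          Real.sqrt_mul_self (by positivity), hsqrt, ← hLcast]
        field_simp

namespace IsTrigPoly

variable {d n N : ℕ} {p : (Fin d → ℝ) → ℂ}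

theorem eq_sum_trigGrid_mul_prod_vpKernel (hp : IsTrigPoly d n p) (hN : 2 * n < N)
    (θ : Fin d → ℝ) :
    p θ = (N ^ d : ℂ)⁻¹ * ∑ k : Fin d → Fin N,
      p (trigGrid N k) * ∏ i, vpKernel n N (θ i - gridAngle N (k i)) := by
  obtain ⟨c, hc⟩ := hp
  have hc' : ∀ θ, p θ = ∑ j ∈ Fintype.piFinset fun _ : Fin d => Icc (-(n : ℤ)) n,
      c j * expI (∑ i, (j i : ℝ) * θ i) := hc
  have hN0 : (N : ℂ) ≠ 0 := by exact_mod_cast (by omega : N ≠ 0)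
  have hmode : ∀ j ∈ Fintype.piFinset fun _ : Fin d => Icc (-(n : ℤ)) n,
      ∑ k : Fin d → Fin N, expI (∑ i, (j i : ℝ) * trigGrid N k i)
          * ∏ i, vpKernel n N (θ i - gridAngle N (k i))
        = N ^ d * expI (∑ i, (j i : ℝ) * θ i) := by
    intro j hj
    simp only [Fintype.mem_piFinset, mem_Icc] at hj
    simp_rw [trigGrid_apply, expI_sum, ← prod_mul_distrib]
    rw [← Fintype.prod_sum (fun i (k : Fin N) =>
      expI (j i * gridAngle N k) * vpKernel n N (θ i - gridAngle N k))]
    simp_rw [sum_expI_mul_vpKernel hN (abs_le.mpr (hj _)), prod_mul_distrib, prod_const, card_univ,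
      Fintype.card_fin]
  simp_rw [hc', sum_mul]
  rw [sum_comm, mul_sum]
  refine sum_congr rfl fun j hj => ?_
  simp_rw [mul_assoc, ← mul_sum, hmode j hj]
  field_simp

theorem norm_le_of_forall_norm_trigGrid_le (hp : IsTrigPoly d n p) (hN : 2 * n < N) {M : ℝ}
    (hM : ∀ k, ‖p (trigGrid N k)‖ ≤ M) (θ : Fin d → ℝ) :
    ‖p θ‖ ≤ √(N / (N - 2 * n)) ^ d * M := by
  have hM0 : 0 ≤ M := (norm_nonneg _).trans (hM fun _ => ⟨0, by omega⟩)
  have hNpos : (0 : ℝ) < N := by exact_mod_cast (by omega : 0 < N)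
  have hlebesgue : ∑ k : Fin d → Fin N, ∏ i, ‖vpKernel n N (θ i - gridAngle N (k i))‖
      ≤ (N * √(N / (N - 2 * n))) ^ d := by
    rw [← Fintype.prod_sum (fun i (k : Fin N) => ‖vpKernel n N (θ i - gridAngle N k)‖)]
    refine (prod_le_prod (fun i _ => sum_nonneg fun _ _ => norm_nonneg _)
      fun i _ => sum_norm_vpKernel_le hN (θ i)).trans_eq ?_
    rw [prod_const, card_univ, Fintype.card_fin]
  calc ‖p θ‖
      ≤ (N ^ d : ℝ)⁻¹ * ∑ k : Fin d → Fin N,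
          ‖p (trigGrid N k)‖ * ∏ i, ‖vpKernel n N (θ i - gridAngle N (k i))‖ := by
        rw [hp.eq_sum_trigGrid_mul_prod_vpKernel hN θ, norm_mul, norm_inv, norm_pow,
          Complex.norm_natCast]
        gcongr
        refine (norm_sum_le _ _).trans_eq (sum_congr rfl fun k _ => ?_)
        rw [norm_mul, norm_prod]
    _ ≤ (N ^ d : ℝ)⁻¹ * (M * (N * √(N / (N - 2 * n))) ^ d) := by
        calc _ ≤ (N ^ d : ℝ)⁻¹ * ∑ k : Fin d → Fin N,
              M * ∏ i, ‖vpKernel n N (θ i - gridAngle N (k i))‖ := by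
              gcongr with k
              exact hM k
          _ ≤ _ := by
              rw [← mul_sum]
              gcongr
    _ = √(N / (N - 2 * n)) ^ d * M := by
        field_simp
        ring

end IsTrigPoly

theorem stmt0_general (d n N : ℕ) (hN : 2 * n + 1 ≤ N)
    (p : (Fin d → ℝ) → ℂ) (hp : IsTrigPoly d n p)
    (α : ℝ) (hα : α = 2 * n / N) (M : ℝ)
    (hM : IsGreatest (Set.range fun k : Fin d → Fin N => ‖p (trigGrid N k)‖) M) :
    ∀ θ : Fin d → ℝ, ‖p θ‖ ≤ (1 - α) ^ (-(d : ℝ) / 2) * M := by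
  intro θ
  have hNpos : (0 : ℝ) < N := by exact_mod_cast (by omega : 0 < N)
  have hgap : (0 : ℝ) < N - 2 * n := by
    have : ((2 * n : ℕ) : ℝ) < N := by exact_mod_cast hN
    push_cast at this
    linarith
  have hconst : (1 - α) ^ (-(d : ℝ) / 2) = √(N / (N - 2 * n)) ^ d := by
    rw [hα, show (1 : ℝ) - 2 * n / N = ((N : ℝ) / (N - 2 * n))⁻¹ by field_simp,
      Real.sqrt_eq_rpow, ← Real.rpow_natCast, ← Real.rpow_mul (by positivity),
      Real.inv_rpow (by positivity), ← Real.rpow_neg (by positivity)]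
    ring_nf
  rw [hconst]
  exact hp.norm_le_of_forall_norm_trigGrid_le hN (fun k => hM.2 ⟨k, rfl⟩) θ

theorem stmt0 (d n N : ℕ) (hd : 1 ≤ d) (hn : 1 ≤ n) (hN : 2 * n + 1 ≤ N)
    (p : (Fin d → ℝ) → ℂ) (hp : IsTrigPoly d n p)
    (α : ℝ) (hα : α = 2 * n / N) (M : ℝ)
    (hM : IsGreatest (Set.range fun k : Fin d → Fin N => ‖p (trigGrid N k)‖) M) :
    ∀ θ : Fin d → ℝ, ‖p θ‖ ≤ (1 - α) ^ (-(d : ℝ) / 2) * M :=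
  stmt0_general d n N hN p hp α hα M hM
end

section
/- Let d ≥ 1, n ≥ 1 and N ≥ 2n+1 be integers and let p be a d-variate trigonometric polynomial of degree at most n. Then for every θ ∈ ℝ^d, |p(θ)| ≤ ( N^{−1} · sup_{t ∈ [0,2π]} Σ_{j=0}^{N−1} |D_{n,N−n}(t − 2πj/N)| )^d · max_{θ_k ∈ Θ_N^d} |p(θ_k)|. -/
/-! The de la Vallée-Poussin kernel `D_{n,m}` has Fourier coefficient `1` at every frequency
`|k| ≤ n` and no frequency beyond `m - 1`. When `m + n ≤ N`, the `N`-point discrete orthogonality of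
the exponentials therefore gives the exact sampling formula
`p θ = N⁻ᵈ Σ_k p(θ_k) Π_i D_{n,m}(θ_i - θ_{k,i})` for trigonometric polynomials of degree `≤ n`.
Taking norms, the sum over the grid factorises into a product of univariate Lebesgue functions
`Σ_j |D_{n,m}(θ_i - 2πj/N)|`, each bounded by its supremum over one period. -/

open Complex Finset
open scoped Real

lemma sum_range_exp_two_pi_I_mul_div (N : ℕ) (r : ℤ) :
    ∑ j ∈ range N, exp (I * r * ((2 * π * j / N : ℝ) : ℂ)) =
      if (N : ℤ) ∣ r then (N : ℂ) else 0 := by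
  rcases eq_or_ne N 0 with rfl | hN
  · simp
  set ζ := exp (2 * π * I / N)
  have hζ : IsPrimitiveRoot ζ N := isPrimitiveRoot_exp N hN
  have hterm (j : ℕ) : exp (I * r * ((2 * π * j / N : ℝ) : ℂ)) = (ζ ^ r) ^ j := by
    rw [← zpow_natCast, ← zpow_mul, ← exp_int_mul, mul_comm r]
    congr 1
    push_cast
    ring
  simp only [hterm]
  split_ifs with hdvd
  · simp [(hζ.zpow_eq_one_iff_dvd r).2 hdvd]
  · have hζr : ζ ^ r ≠ 1 := mt (hζ.zpow_eq_one_iff_dvd r).1 hdvd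
    rw [geom_sum_eq hζr, ← zpow_natCast, ← zpow_mul, mul_comm, zpow_mul, zpow_natCast,
      hζ.pow_eq_one, one_zpow, sub_self, zero_div]

lemma sum_range_exp_two_pi_I_mul_div_of_abs_lt {N : ℕ} {r : ℤ} (hr : |r| < N) :
    ∑ j ∈ range N, exp (I * r * ((2 * π * j / N : ℝ) : ℂ)) = if r = 0 then (N : ℂ) else 0 := by
  rw [sum_range_exp_two_pi_I_mul_div]
  congr 1
  exact propext ⟨fun h => Int.eq_zero_of_abs_lt_dvd h hr, fun h => h ▸ dvd_zero _⟩

lemma dirichletKer_sub (l : ℕ) (θ t : ℝ) :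
    dirichletKer l (θ - t) = ∑ q ∈ Icc (-(l : ℤ)) l, exp (I * q * θ) * exp (I * (-q) * t) := by
  unfold dirichletKer
  refine sum_congr rfl fun q _ => ?_
  rw [← Complex.exp_add]
  push_cast
  ring_nf

/-- Sampling at `N` equispaced nodes against `D_l` reproduces frequencies `k` as long as no other
frequency of `D_l` is aliased to `k`. -/
lemma sum_range_exp_mul_dirichletKer_sub {N l : ℕ} {k : ℤ} (hkl : |k| ≤ l) (hlN : l + |k| < N)
    (θ : ℝ) :
    ∑ j ∈ range N, exp (I * k * ((2 * π * j / N : ℝ) : ℂ)) * dirichletKer l (θ - 2 * π * j / N) =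
      N * exp (I * k * θ) := by
  simp only [dirichletKer_sub, mul_sum]
  rw [sum_comm]
  have hq (q : ℤ) (hq : q ∈ Icc (-(l : ℤ)) l) :
      ∑ j ∈ range N, exp (I * k * ((2 * π * j / N : ℝ) : ℂ)) *
          (exp (I * q * θ) * exp (I * (-q) * ((2 * π * j / N : ℝ) : ℂ))) =
        if k - q = 0 then exp (I * q * θ) * N else 0 := by
    have hqk : |k - q| < N := by
      have := abs_le.2 (mem_Icc.1 hq)
      linarith [abs_sub k q]
    rw [← mul_ite_zero, ← sum_range_exp_two_pi_I_mul_div_of_abs_lt hqk, mul_sum]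
    refine sum_congr rfl fun j _ => ?_
    rw [mul_left_comm, ← Complex.exp_add]
    push_cast
    ring_nf
  rw [sum_congr rfl hq]
  simp only [sub_eq_zero, sum_ite_eq, mem_Icc]
  rw [if_pos (abs_le.1 hkl), mul_comm]

lemma sum_range_exp_mul_vpKer_sub {N n m : ℕ} {k : ℤ} (hnm : n < m) (hmN : m + n ≤ N)
    (hk : |k| ≤ n) (θ : ℝ) :
    ∑ j ∈ range N, exp (I * k * ((2 * π * j / N : ℝ) : ℂ)) * vpKer n m (θ - 2 * π * j / N) =
      N * exp (I * k * θ) := by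
  have hmn : (m : ℂ) - n ≠ 0 := sub_ne_zero.2 (by exact_mod_cast hnm.ne')
  have hl (l : ℕ) (hl : l ∈ Ico n m) :
      ∑ j ∈ range N, exp (I * k * ((2 * π * j / N : ℝ) : ℂ)) * dirichletKer l (θ - 2 * π * j / N) =
        N * exp (I * k * θ) := by
    rw [mem_Ico] at hl
    exact sum_range_exp_mul_dirichletKer_sub (l := l) (by omega) (by omega) θ
  calc ∑ j ∈ range N, exp (I * k * ((2 * π * j / N : ℝ) : ℂ)) * vpKer n m (θ - 2 * π * j / N)
      = 1 / ((m : ℂ) - n) * ∑ l ∈ Ico n m, ∑ j ∈ range N,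
          exp (I * k * ((2 * π * j / N : ℝ) : ℂ)) * dirichletKer l (θ - 2 * π * j / N) := by
        simp only [vpKer, mul_sum, mul_left_comm _ (1 / _ : ℂ)]
        exact sum_comm
    _ = N * exp (I * k * θ) := by
        rw [sum_congr rfl hl, sum_const, Nat.card_Ico, nsmul_eq_mul, Nat.cast_sub hnm.le]
        field_simp

lemma sum_trigGrid_prod {R : Type*} [CommSemiring R] (N : ℕ) {d : ℕ} (g : Fin d → ℝ → R) :
    ∑ k : Fin d → Fin N, ∏ i, g i (trigGrid N k i) = ∏ i, ∑ j ∈ range N, g i (2 * π * j / N) := by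
  rw [← prod_congr rfl fun i _ => Fin.sum_univ_eq_sum_range (fun j => g i (2 * π * j / N)) N,
    Fintype.prod_sum]
  rfl

lemma exp_I_mul_ofReal_sum {d : ℕ} (c : Fin d → ℤ) (θ : Fin d → ℝ) :
    exp (I * ((∑ i, (c i : ℝ) * θ i : ℝ) : ℂ)) = ∏ i, exp (I * c i * θ i) := by
  rw [← Complex.exp_sum]
  push_cast
  simp only [mul_sum, mul_assoc]

lemma sum_trigGrid_exp_mul_prod_vpKer {N n m d : ℕ} (hnm : n < m) (hmN : m + n ≤ N)
    (c : Fin d → ℤ) (hc : ∀ i, |c i| ≤ n) (θ : Fin d → ℝ) :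
    ∑ k : Fin d → Fin N, exp (I * ((∑ i, (c i : ℝ) * trigGrid N k i : ℝ) : ℂ)) *
        ∏ i, vpKer n m (θ i - trigGrid N k i) =
      N ^ d * exp (I * ((∑ i, (c i : ℝ) * θ i : ℝ) : ℂ)) := by
  simp only [exp_I_mul_ofReal_sum, ← prod_mul_distrib]
  rw [sum_trigGrid_prod N (fun i (t : ℝ) => exp (I * c i * t) * vpKer n m (θ i - t))]
  simp only [sum_range_exp_mul_vpKer_sub hnm hmN (hc _), prod_mul_distrib, prod_const,
    card_univ, Fintype.card_fin]

lemma IsTrigPoly.eq_sum_trigGrid_mul_prod_vpKer {d n m N : ℕ} {p : (Fin d → ℝ) → ℂ}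
    (hp : IsTrigPoly d n p) (hnm : n < m) (hmN : m + n ≤ N) (θ : Fin d → ℝ) :
    p θ = (N : ℂ)⁻¹ ^ d * ∑ k : Fin d → Fin N,
      p (trigGrid N k) * ∏ i, vpKer n m (θ i - trigGrid N k i) := by
  obtain ⟨c, hc⟩ := hp
  have hN : (N : ℂ) ≠ 0 := by exact_mod_cast (show N ≠ 0 by omega)
  simp only [hc, sum_mul, mul_assoc]
  rw [sum_comm]
  simp only [← mul_sum]
  rw [mul_sum]
  refine sum_congr rfl fun c' hc' => ?_
  have hc'_le (i : Fin d) : |c' i| ≤ n := abs_le.2 (mem_Icc.1 (Fintype.mem_piFinset.1 hc' i))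
  rw [sum_trigGrid_exp_mul_prod_vpKer hnm hmN c' hc'_le θ, inv_pow, mul_left_comm,
    ← mul_assoc _ (_ ^ d), inv_mul_cancel₀ (pow_ne_zero d hN), one_mul]

lemma vpKer_add_two_pi (n m : ℕ) (t : ℝ) : vpKer n m (t + 2 * π) = vpKer n m t := by
  unfold vpKer dirichletKer
  congr 1
  refine sum_congr rfl fun l _ => sum_congr rfl fun q _ => ?_
  rw [ofReal_add, mul_add, Complex.exp_add, ofReal_mul, ofReal_ofNat,
    show I * q * (2 * π) = q * (2 * π * I) by ring, exp_int_mul_two_pi_mul_I, mul_one]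

lemma continuous_vpKer (n m : ℕ) : Continuous (vpKer n m) := by
  unfold vpKer dirichletKer
  fun_prop

noncomputable def vpLebesgueFn (n m N : ℕ) (t : ℝ) : ℝ :=
  ∑ j ∈ range N, ‖vpKer n m (t - 2 * π * j / N)‖

lemma vpLebesgueFn_nonneg (n m N : ℕ) (t : ℝ) : 0 ≤ vpLebesgueFn n m N t :=
  sum_nonneg fun _ _ => norm_nonneg _

lemma vpLebesgueFn_periodic (n m N : ℕ) : Function.Periodic (vpLebesgueFn n m N) (2 * π) := by
  intro t
  refine sum_congr rfl fun j _ => ?_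
  rw [add_sub_right_comm, vpKer_add_two_pi]

lemma continuous_vpLebesgueFn (n m N : ℕ) : Continuous (vpLebesgueFn n m N) := by
  unfold vpLebesgueFn
  have := continuous_vpKer n m
  fun_prop

lemma Function.Periodic.le_sSup_image_Icc {f : ℝ → ℝ} {T : ℝ} (hf : Function.Periodic f T)
    (hT : 0 < T) (hcont : Continuous f) (t : ℝ) : f t ≤ sSup (f '' Set.Icc 0 T) := by
  have hrange : f '' Set.Icc 0 T = Set.range f := by simpa using hf.image_Icc hT 0
  exact le_csSup (isCompact_Icc.image hcont).bddAbove (hrange ▸ Set.mem_range_self t)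

lemma vpLebesgueFn_le_sSup (n m N : ℕ) (t : ℝ) :
    vpLebesgueFn n m N t ≤
      sSup {x : ℝ | ∃ s ∈ Set.Icc (0 : ℝ) (2 * π), x = vpLebesgueFn n m N s} := by
  have hset : {x : ℝ | ∃ s ∈ Set.Icc (0 : ℝ) (2 * π), x = vpLebesgueFn n m N s} =
      vpLebesgueFn n m N '' Set.Icc 0 (2 * π) := by
    ext x
    simp [eq_comm]
  rw [hset]
  exact (vpLebesgueFn_periodic n m N).le_sSup_image_Icc Real.two_pi_pos
    (continuous_vpLebesgueFn n m N) t

lemma IsTrigPoly.norm_le_mul_prod_vpLebesgueFn {d n m N : ℕ} {p : (Fin d → ℝ) → ℂ}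
    (hp : IsTrigPoly d n p) (hnm : n < m) (hmN : m + n ≤ N) {M : ℝ}
    (hM : ∀ k : Fin d → Fin N, ‖p (trigGrid N k)‖ ≤ M) (θ : Fin d → ℝ) :
    ‖p θ‖ ≤ (N : ℝ)⁻¹ ^ d * (M * ∏ i, vpLebesgueFn n m N (θ i)) := by
  calc ‖p θ‖
      = (N : ℝ)⁻¹ ^ d * ‖∑ k : Fin d → Fin N,
          p (trigGrid N k) * ∏ i, vpKer n m (θ i - trigGrid N k i)‖ := by
        rw [hp.eq_sum_trigGrid_mul_prod_vpKer hnm hmN θ, norm_mul, norm_pow, norm_inv,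
          norm_natCast]
    _ ≤ (N : ℝ)⁻¹ ^ d * ∑ k : Fin d → Fin N, M * ∏ i, ‖vpKer n m (θ i - trigGrid N k i)‖ := by
        gcongr
        refine (norm_sum_le _ _).trans (sum_le_sum fun k _ => ?_)
        rw [norm_mul, norm_prod]
        gcongr
        exact hM k
    _ = (N : ℝ)⁻¹ ^ d * (M * ∏ i, vpLebesgueFn n m N (θ i)) := by
        rw [← mul_sum, sum_trigGrid_prod N (fun i t => ‖vpKer n m (θ i - t)‖)]
        rfl

theorem stmt1_general (d n N : ℕ) (hN : 2 * n + 1 ≤ N)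
    (p : (Fin d → ℝ) → ℂ) (hp : IsTrigPoly d n p) (M : ℝ)
    (hM : IsGreatest (Set.range fun k : Fin d → Fin N => ‖p (trigGrid N k)‖) M) :
    ∀ θ : Fin d → ℝ, ‖p θ‖ ≤
      ((1 / (N : ℝ)) * sSup {x : ℝ | ∃ t ∈ Set.Icc (0 : ℝ) (2 * Real.pi),
          x = ∑ j ∈ Finset.range N,
            ‖vpKer n (N - n) (t - 2 * Real.pi * (j : ℝ) / N)‖}) ^ d * M := by
  intro θ
  show ‖p θ‖ ≤ ((1 / (N : ℝ)) * sSup {x : ℝ | ∃ t ∈ Set.Icc (0 : ℝ) (2 * π),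
    x = vpLebesgueFn n (N - n) N t}) ^ d * M
  set S := sSup {x : ℝ | ∃ t ∈ Set.Icc (0 : ℝ) (2 * π), x = vpLebesgueFn n (N - n) N t}
  have hM_nonneg : 0 ≤ M := by
    obtain ⟨k, hk⟩ := hM.1
    exact hk ▸ norm_nonneg _
  have hprod : ∏ i, vpLebesgueFn n (N - n) N (θ i) ≤ S ^ d := by
    calc ∏ i, vpLebesgueFn n (N - n) N (θ i) ≤ ∏ _i : Fin d, S :=
          prod_le_prod (fun i _ => vpLebesgueFn_nonneg n (N - n) N (θ i))
            (fun i _ => vpLebesgueFn_le_sSup n (N - n) N (θ i))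
      _ = S ^ d := by rw [prod_const, card_univ, Fintype.card_fin]
  calc ‖p θ‖ ≤ (N : ℝ)⁻¹ ^ d * (M * ∏ i, vpLebesgueFn n (N - n) N (θ i)) :=
        hp.norm_le_mul_prod_vpLebesgueFn (by omega) (by omega) (fun k => hM.2 ⟨k, rfl⟩) θ
    _ ≤ (N : ℝ)⁻¹ ^ d * (M * S ^ d) := by gcongr
    _ = ((1 / (N : ℝ)) * S) ^ d * M := by ring

theorem stmt1 (d n N : ℕ) (hd : 1 ≤ d) (hn : 1 ≤ n) (hN : 2 * n + 1 ≤ N)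
    (p : (Fin d → ℝ) → ℂ) (hp : IsTrigPoly d n p) (M : ℝ)
    (hM : IsGreatest (Set.range fun k : Fin d → Fin N => ‖p (trigGrid N k)‖) M) :
    ∀ θ : Fin d → ℝ, ‖p θ‖ ≤
      ((1 / (N : ℝ)) * sSup {x : ℝ | ∃ t ∈ Set.Icc (0 : ℝ) (2 * Real.pi),
          x = ∑ j ∈ Finset.range N,
            ‖vpKer n (N - n) (t - 2 * Real.pi * (j : ℝ) / N)‖}) ^ d * M :=
  stmt1_general d n N hN p hp M hM
end

section
/- Let d ≥ 1, n ≥ 0 be integers, let m > n and N ≥ n + m be integers, and let p be a d-variate trigonometric polynomial of degree at most n. Then for every θ ∈ ℝ^d, p(θ) = N^{−d} Σ_{θ_k ∈ Θ_N^d} p(θ_k) · D_{n,m}^d(θ − θ_k). -/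
/-!
On the grid `2πa/N`, `a < N`, the sum of `exp (i r t)` is `N` if `N ∣ r` and `0` otherwise.
Expanding `D_l(θ - t) = Σ_{|q| ≤ l} exp (i q θ) exp (-i q t)`, the sampled sum of
`exp (i j t) D_l(θ - t)` keeps only the frequency `q = j` as long as `|j - q| ≤ |j| + l < N`,
so it equals `N exp (i j θ)`. For `|j| ≤ n` this holds for every `l ∈ [n, m)` because
`n + m ≤ N`, hence also for the average `D_{n,m}`; the sum over the product grid factorises
over the coordinates, and linearity in the coefficients of `p` finishes the proof.
-/

open Complex Finset

noncomputable def trigMonomial (j : ℤ) (t : ℝ) : ℂ := exp (I * j * t)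

lemma trigMonomial_mul_trigMonomial_sub (j q : ℤ) (θ t : ℝ) :
    trigMonomial j t * trigMonomial q (θ - t) = trigMonomial q θ * trigMonomial (j - q) t := by
  simp only [trigMonomial, ← exp_add]
  congr 1
  push_cast
  ring

lemma trigMonomial_grid_eq_pow {N : ℕ} (hN : N ≠ 0) (r : ℤ) (a : ℕ) :
    trigMonomial r (2 * Real.pi * a / N) = (exp (2 * Real.pi * I / N) ^ r) ^ a := by
  rw [← exp_int_mul, ← exp_nat_mul, trigMonomial]
  congr 1
  push_cast
  field_simp

lemma sum_trigMonomial_grid {N : ℕ} (hN : N ≠ 0) (r : ℤ) :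
    ∑ a : Fin N, trigMonomial r (2 * Real.pi * a / N) = if (N : ℤ) ∣ r then (N : ℂ) else 0 := by
  have hw := isPrimitiveRoot_exp N hN
  set ζ := exp (2 * Real.pi * I / N) ^ r
  rw [Fin.sum_univ_eq_sum_range (fun a => trigMonomial r (2 * Real.pi * a / N)),
    sum_congr rfl fun a _ => trigMonomial_grid_eq_pow hN r a]
  split_ifs with hdvd
  · simp [(hw.zpow_eq_one_iff_dvd r).mpr hdvd]
  · have hζN : ζ ^ N = 1 := by
      rw [← zpow_natCast, ← zpow_mul, mul_comm r, zpow_mul, zpow_natCast, hw.pow_eq_one, one_zpow]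
    rw [geom_sum_eq (mt (hw.zpow_eq_one_iff_dvd r).mp hdvd), hζN, sub_self, zero_div]

lemma dirichletKer_eq_sum_trigMonomial (l : ℕ) (t : ℝ) :
    dirichletKer l t = ∑ q ∈ Icc (-(l : ℤ)) l, trigMonomial q t := rfl

lemma sum_grid_trigMonomial_mul_dirichletKer {N l : ℕ} {j : ℤ} (hj : |j| ≤ l)
    (hlN : l + |j| < N) (θ : ℝ) :
    ∑ a : Fin N, trigMonomial j (2 * Real.pi * a / N) * dirichletKer l (θ - 2 * Real.pi * a / N) =
      N * trigMonomial j θ := by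
  have hN : N ≠ 0 := by have := abs_nonneg j; omega
  calc ∑ a : Fin N, trigMonomial j (2 * Real.pi * a / N) * dirichletKer l (θ - 2 * Real.pi * a / N)
      = ∑ q ∈ Icc (-(l : ℤ)) l,
          trigMonomial q θ * ∑ a : Fin N, trigMonomial (j - q) (2 * Real.pi * a / N) := by
        simp only [dirichletKer_eq_sum_trigMonomial, mul_sum, trigMonomial_mul_trigMonomial_sub]
        exact sum_comm
    _ = ∑ q ∈ Icc (-(l : ℤ)) l, if j = q then N * trigMonomial j θ else 0 := by
        refine sum_congr rfl fun q hq => ?_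
        have hjq : |j - q| < N := by
          rw [mem_Icc] at hq
          have := le_abs_self j
          have := neg_abs_le j
          rw [abs_lt]
          omega
        rw [sum_trigMonomial_grid hN]
        by_cases h : j = q
        · rw [if_pos (by rw [h, sub_self]; exact dvd_zero _), if_pos h, h, mul_comm]
        · rw [if_neg (mt (Int.eq_zero_of_abs_lt_dvd · hjq) (sub_ne_zero.mpr h)), if_neg h, mul_zero]
    _ = N * trigMonomial j θ := by
        rw [sum_ite_eq, if_pos (mem_Icc.mpr (abs_le.mp hj))]

lemma sum_grid_trigMonomial_mul_vpKer {n m N : ℕ} (hm : n < m) (hN : n + m ≤ N) {j : ℤ}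
    (hj : |j| ≤ n) (θ : ℝ) :
    ∑ a : Fin N, trigMonomial j (2 * Real.pi * a / N) * vpKer n m (θ - 2 * Real.pi * a / N) =
      N * trigMonomial j θ := by
  calc ∑ a : Fin N, trigMonomial j (2 * Real.pi * a / N) * vpKer n m (θ - 2 * Real.pi * a / N)
      = 1 / ((m : ℂ) - n) * ∑ l ∈ Ico n m, ∑ a : Fin N,
          trigMonomial j (2 * Real.pi * a / N) * dirichletKer l (θ - 2 * Real.pi * a / N) := by
        simp only [vpKer, mul_sum, mul_left_comm (trigMonomial _ _)]
        exact sum_comm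
    _ = 1 / ((m : ℂ) - n) * ∑ l ∈ Ico n m, N * trigMonomial j θ := by
        refine congrArg _ (sum_congr rfl fun l hl => ?_)
        rw [mem_Ico] at hl
        exact sum_grid_trigMonomial_mul_dirichletKer (by omega) (by omega) θ
    _ = N * trigMonomial j θ := by
        have hmn : (m : ℂ) - n ≠ 0 := sub_ne_zero.mpr (Nat.cast_injective.ne hm.ne')
        rw [sum_const, Nat.card_Ico, nsmul_eq_mul, Nat.cast_sub hm.le]
        field_simp

lemma exp_sum_eq_prod_trigMonomial {d : ℕ} (j : Fin d → ℤ) (θ : Fin d → ℝ) :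
    exp (I * ((∑ i, (j i : ℝ) * θ i : ℝ) : ℂ)) = ∏ i, trigMonomial (j i) (θ i) := by
  simp only [trigMonomial, ← exp_sum]
  push_cast
  rw [mul_sum]
  exact congrArg exp (sum_congr rfl fun i _ => by ring)

lemma sum_trigGrid_prod_trigMonomial_mul_vpKer {d n m N : ℕ} (hm : n < m) (hN : n + m ≤ N)
    {j : Fin d → ℤ} (hj : ∀ i, |j i| ≤ n) (θ : Fin d → ℝ) :
    ∑ k : Fin d → Fin N, (∏ i, trigMonomial (j i) (trigGrid N k i)) *
        ∏ i, vpKer n m (θ i - trigGrid N k i) =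
      N ^ d * ∏ i, trigMonomial (j i) (θ i) := by
  simp only [trigGrid, ← prod_mul_distrib]
  rw [← Fintype.prod_sum (fun i (a : Fin N) =>
    trigMonomial (j i) (2 * Real.pi * a / N) * vpKer n m (θ i - 2 * Real.pi * a / N))]
  simp only [sum_grid_trigMonomial_mul_vpKer hm hN (hj _), prod_mul_distrib, prod_const,
    card_univ, Fintype.card_fin]

theorem stmt3_general (d n m N : ℕ) (hm : n < m) (hN : n + m ≤ N)
    (p : (Fin d → ℝ) → ℂ) (hp : IsTrigPoly d n p) :
    ∀ θ : Fin d → ℝ, p θ = ((N : ℂ) ^ d)⁻¹ *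
      ∑ k : Fin d → Fin N, p (trigGrid N k) *
        ∏ i, vpKer n m (θ i - trigGrid N k i) := by
  intro θ
  obtain ⟨c, hc⟩ := hp
  have hNd : (N : ℂ) ^ d ≠ 0 := pow_ne_zero _ (Nat.cast_ne_zero.mpr (by omega))
  suffices ∑ k : Fin d → Fin N, p (trigGrid N k) * ∏ i, vpKer n m (θ i - trigGrid N k i) =
      N ^ d * p θ by
    rw [this, inv_mul_cancel_left₀ hNd]
  simp only [hc, exp_sum_eq_prod_trigMonomial, sum_mul, mul_assoc]
  rw [sum_comm, mul_sum]
  refine sum_congr rfl fun j hj => ?_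
  rw [← mul_sum, sum_trigGrid_prod_trigMonomial_mul_vpKer hm hN
    (fun i => abs_le.mpr (mem_Icc.mp (Fintype.mem_piFinset.mp hj i))), mul_left_comm]

theorem stmt3 (d n m N : ℕ) (hd : 1 ≤ d) (hm : n < m) (hN : n + m ≤ N)
    (p : (Fin d → ℝ) → ℂ) (hp : IsTrigPoly d n p) :
    ∀ θ : Fin d → ℝ, p θ = ((N : ℂ) ^ d)⁻¹ *
      ∑ k : Fin d → Fin N, p (trigGrid N k) *
        ∏ i, vpKer n m (θ i - trigGrid N k i) :=
  stmt3_general d n m N hm hN p hp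
end

section
/- Let 0 ≤ n < m be integers and let N ≥ n + m be an integer. Then for every t ∈ ℝ, Σ_{j=0}^{N−1} |D_{n,m}(t − 2πj/N)| ≤ N · sqrt( (m+n)/(m−n) ). -/
/-
Multiplied by the unimodular factor `e^{i(m-1)t}`, the sum `Σ_{l=n}^{m-1} D_l(t)` equals the
product `G_{m+n}(t) G_{m-n}(t)` of one-sided Dirichlet kernels `G_L(t) = Σ_{k<L} e^{ikt}`, so
`|D_{n,m}| = |G_{m+n}| |G_{m-n}| / (m-n)`. For `L ≤ N` the frequencies `a - b` (`a, b < L`) of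
`|G_L|² = Σ_{a,b} e^{i(a-b)t}` are distinct modulo `N`, so sampling on the grid `t - 2πj/N` gives
the discrete Parseval identity `Σ_j |G_L(t - 2πj/N)|² = N L`. Cauchy–Schwarz then bounds the sum
by `√(N(m+n)) √(N(m-n)) / (m-n)`.
-/

open Complex Finset

noncomputable def oneSidedDirichletKer (L : ℕ) (t : ℝ) : ℂ :=
  ∑ k ∈ range L, exp (I * t) ^ k

theorem sum_Ico_pow_mul_geom_sum_two_mul_add_one {R : Type*} [CommSemiring R] (x : R) {n m : ℕ}
    (hnm : n ≤ m) :
    ∑ l ∈ Ico n m, x ^ (m - 1 - l) * ∑ i ∈ range (2 * l + 1), x ^ i =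
      (∑ i ∈ range (m + n), x ^ i) * ∑ i ∈ range (m - n), x ^ i := by
  induction m, hnm using Nat.le_induction with
  | base => simp
  | succ m hnm ih =>
    have hshift : ∑ l ∈ Ico n m, x ^ (m + 1 - 1 - l) * ∑ i ∈ range (2 * l + 1), x ^ i =
        x * ∑ l ∈ Ico n m, x ^ (m - 1 - l) * ∑ i ∈ range (2 * l + 1), x ^ i := by
      rw [mul_sum]
      refine sum_congr rfl fun l hl => ?_
      rw [← mul_assoc, ← pow_succ', Nat.add_sub_cancel]
      congr 2
      have := (mem_Ico.mp hl).2
      omega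
    have hsplit : ∑ i ∈ range (2 * m + 1), x ^ i =
        ∑ i ∈ range (m - n), x ^ i + x ^ (m - n) * ∑ i ∈ range (m + n + 1), x ^ i := by
      rw [show 2 * m + 1 = (m - n) + (m + n + 1) by omega, sum_range_add, mul_sum]
      simp only [pow_add]
    rw [sum_Ico_succ_top (by omega), hshift, ih, Nat.add_sub_cancel, Nat.sub_self, pow_zero,
      one_mul, hsplit, show m + 1 + n = m + n + 1 by omega, show m + 1 - n = m - n + 1 by omega,
      geom_sum_succ, geom_sum_succ']
    ring

theorem pow_mul_dirichletKer (l : ℕ) (t : ℝ) :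
    exp (I * t) ^ l * dirichletKer l t = oneSidedDirichletKer (2 * l + 1) t := by
  rw [dirichletKer, oneSidedDirichletKer, mul_sum]
  refine sum_nbij' (fun k => (k + l).toNat) (fun i => (i : ℤ) - l) ?_ ?_ ?_ ?_ fun k hk => ?_
  iterate 4 (intro k hk; simp only [mem_Icc, mem_range] at hk ⊢; omega)
  rw [← exp_nat_mul, ← exp_nat_mul, ← exp_add]
  congr 1
  rw [← Int.cast_natCast (R := ℂ) (k + l).toNat, Int.toNat_of_nonneg (by simp at hk; omega)]
  push_cast
  ring

theorem pow_mul_sum_Ico_dirichletKer {n m : ℕ} (hnm : n ≤ m) (t : ℝ) :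
    exp (I * t) ^ (m - 1) * ∑ l ∈ Ico n m, dirichletKer l t =
      oneSidedDirichletKer (m + n) t * oneSidedDirichletKer (m - n) t := by
  rw [oneSidedDirichletKer, oneSidedDirichletKer,
    ← sum_Ico_pow_mul_geom_sum_two_mul_add_one _ hnm, mul_sum]
  refine sum_congr rfl fun l hl => ?_
  rw [← oneSidedDirichletKer, ← pow_mul_dirichletKer, ← mul_assoc, ← pow_add,
    Nat.sub_add_cancel (by have := (mem_Ico.mp hl).2; omega)]

theorem norm_vpKer {n m : ℕ} (hnm : n < m) (t : ℝ) :
    ‖vpKer n m t‖ =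
      ‖oneSidedDirichletKer (m + n) t‖ * ‖oneSidedDirichletKer (m - n) t‖ / ((m : ℝ) - n) := by
  have h := congrArg norm (pow_mul_sum_Ico_dirichletKer hnm.le t)
  rw [norm_mul, norm_pow, mul_comm I, norm_exp_ofReal_mul_I, one_pow, one_mul, norm_mul] at h
  rw [vpKer, norm_mul, h, one_div, norm_inv, ← ofReal_natCast, ← ofReal_natCast, ← ofReal_sub,
    norm_real, Real.norm_of_nonneg (by simpa using hnm.le), inv_mul_eq_div]

theorem sum_range_exp_mul_grid_eq_zero {N : ℕ} {k : ℤ} (hk : ¬ (N : ℤ) ∣ k) (t : ℝ) :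
    ∑ j ∈ range N, exp (I * k * ↑(t - 2 * Real.pi * j / N)) = 0 := by
  rcases Nat.eq_zero_or_pos N with rfl | hN
  · simp
  have hζ := isPrimitiveRoot_exp N hN.ne'
  have hw : exp (2 * Real.pi * I / N) ^ (-k) ≠ 1 := by
    rwa [Ne, hζ.zpow_eq_one_iff_dvd, dvd_neg]
  have hwN : (exp (2 * Real.pi * I / N) ^ (-k)) ^ N = 1 := by
    rw [← zpow_natCast, ← zpow_mul, hζ.zpow_eq_one_iff_dvd]
    exact dvd_mul_left _ _
  have hterm : ∀ j : ℕ, exp (I * k * ↑(t - 2 * Real.pi * j / N)) =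
      exp (I * k * t) * (exp (2 * Real.pi * I / N) ^ (-k)) ^ j := by
    intro j
    rw [← exp_int_mul, ← exp_nat_mul, ← exp_add]
    congr 1
    push_cast
    field_simp
    ring
  rw [sum_congr rfl fun j _ => hterm j, ← mul_sum, geom_sum_eq hw, hwN, sub_self, zero_div,
    mul_zero]

theorem sq_norm_oneSidedDirichletKer (L : ℕ) (s : ℝ) :
    (‖oneSidedDirichletKer L s‖ ^ 2 : ℂ) =
      ∑ a ∈ range L, ∑ b ∈ range L, exp (I * ((a : ℤ) - b : ℤ) * s) := by
  rw [← mul_conj', oneSidedDirichletKer, map_sum, sum_mul_sum]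
  refine sum_congr rfl fun a _ => sum_congr rfl fun b _ => ?_
  rw [map_pow, ← exp_conj, map_mul, conj_I, conj_ofReal, ← exp_nat_mul, ← exp_nat_mul,
    ← exp_add]
  congr 1
  push_cast
  ring

theorem sum_range_sq_norm_oneSidedDirichletKer_grid {L N : ℕ} (hLN : L ≤ N) (t : ℝ) :
    ∑ j ∈ range N, ‖oneSidedDirichletKer L (t - 2 * Real.pi * j / N)‖ ^ 2 = (N : ℝ) * L := by
  have horth : ∀ a ∈ range L, ∀ b ∈ range L,
      ∑ j ∈ range N, exp (I * ((a : ℤ) - b : ℤ) * ↑(t - 2 * Real.pi * j / N)) =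
        if a = b then (N : ℂ) else 0 := by
    intro a ha b hb
    split_ifs with hab
    · simp [hab]
    · refine sum_range_exp_mul_grid_eq_zero (fun hdvd => hab ?_) t
      have := Int.eq_zero_of_abs_lt_dvd hdvd (abs_lt.mpr (by simp at ha hb; omega))
      omega
  have h : ((∑ j ∈ range N, ‖oneSidedDirichletKer L (t - 2 * Real.pi * j / N)‖ ^ 2 : ℝ) : ℂ) =
      (N : ℂ) * L := by
    push_cast
    simp_rw [sq_norm_oneSidedDirichletKer]
    rw [sum_comm, sum_congr rfl fun a ha => sum_comm.trans (sum_congr rfl (horth a ha))]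
    simp +contextual [mul_comm]
  exact_mod_cast h

theorem sqrt_mul_mul_sqrt_mul_div {N a b : ℝ} (hN : 0 ≤ N) (ha : 0 < a) :
    √(N * b) * √(N * a) / a = N * √(b / a) := by
  rw [← Real.sqrt_mul' _ (by positivity),
    show N * b * (N * a) = b / a * (N * a) ^ 2 by field_simp,
    Real.sqrt_mul' _ (by positivity), Real.sqrt_sq (by positivity)]
  field_simp

theorem stmt6 (n m N : ℕ) (hm : n < m) (hN : n + m ≤ N) :
    ∀ t : ℝ, ∑ j ∈ Finset.range N,
        ‖vpKer n m (t - 2 * Real.pi * (j : ℝ) / N)‖ ≤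
      (N : ℝ) * Real.sqrt (((m : ℝ) + n) / ((m : ℝ) - n)) := by
  intro t
  have hmn : (0 : ℝ) < m - n := by simpa using hm
  calc ∑ j ∈ range N, ‖vpKer n m (t - 2 * Real.pi * j / N)‖
      = (∑ j ∈ range N, ‖oneSidedDirichletKer (m + n) (t - 2 * Real.pi * j / N)‖ *
          ‖oneSidedDirichletKer (m - n) (t - 2 * Real.pi * j / N)‖) / ((m : ℝ) - n) := by
        simp only [norm_vpKer hm, sum_div]
    _ ≤ √(∑ j ∈ range N, ‖oneSidedDirichletKer (m + n) (t - 2 * Real.pi * j / N)‖ ^ 2) *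
          √(∑ j ∈ range N, ‖oneSidedDirichletKer (m - n) (t - 2 * Real.pi * j / N)‖ ^ 2) /
          ((m : ℝ) - n) := by
        gcongr
        exact Real.sum_mul_le_sqrt_mul_sqrt _ _ _
    _ = √(N * ((m : ℝ) + n)) * √(N * ((m : ℝ) - n)) / ((m : ℝ) - n) := by
        rw [sum_range_sq_norm_oneSidedDirichletKer_grid (by omega),
          sum_range_sq_norm_oneSidedDirichletKer_grid (by omega), Nat.cast_sub hm.le, Nat.cast_add]
    _ = N * √(((m : ℝ) + n) / ((m : ℝ) - n)) := sqrt_mul_mul_sqrt_mul_div N.cast_nonneg hmn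
end

section
/- Let d ≥ 1, n ≥ 0 and N ≥ 2n+1 be integers, let p be a real d-variate trigonometric polynomial of degree at most n, and set A = max_{θ_k ∈ Θ_N^d} p(θ_k) and B = min_{θ_k ∈ Θ_N^d} p(θ_k). Suppose C > 1 is a real number such that every real d-variate trigonometric polynomial q of degree at most n satisfies sup_{θ ∈ ℝ^d} |q(θ)| ≤ C · max_{θ_k ∈ Θ_N^d} |q(θ_k)|. If p(θ_k) > 0 for all θ_k ∈ Θ_N^d and A/B < (C + 1)/(C − 1), then p(θ) > 0 for all θ ∈ ℝ^d. -/
/-! Recentre `p` at the midpoint `μ = (A + B) / 2` of its grid values: `p − μ` is again a real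
trigonometric polynomial of degree at most `n` whose grid values have modulus at most `(A − B) / 2`,
so `|p − μ| ≤ C (A − B) / 2` everywhere. The ratio condition is equivalent to `C (A − B) < A + B`,
i.e. this deviation bound is smaller than `μ`. -/

lemma isTrigPoly_const (d n : ℕ) (a : ℂ) : IsTrigPoly d n fun _ => a := by
  classical
  refine ⟨Pi.single 0 a, fun θ => ?_⟩
  rw [Finset.sum_eq_single_of_mem 0 (by simp [Fintype.mem_piFinset])]
  · simp
  · intro k _ hk
    simp [hk]

lemma IsTrigPoly.sub {d n : ℕ} {f g : (Fin d → ℝ) → ℂ} (hf : IsTrigPoly d n f)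
    (hg : IsTrigPoly d n g) : IsTrigPoly d n fun θ => f θ - g θ := by
  obtain ⟨cf, hcf⟩ := hf
  obtain ⟨cg, hcg⟩ := hg
  exact ⟨cf - cg, fun θ => by simp [hcf θ, hcg θ, sub_mul, Finset.sum_sub_distrib]⟩

lemma IsTrigPoly.sub_const {d n : ℕ} {p : (Fin d → ℝ) → ℝ}
    (hp : IsTrigPoly d n fun θ => (p θ : ℂ)) (a : ℝ) :
    IsTrigPoly d n fun θ => ((p θ - a : ℝ) : ℂ) := by
  simpa only [Complex.ofReal_sub] using hp.sub (isTrigPoly_const d n a)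

lemma abs_sub_midpoint_le {x a b : ℝ} (hb : b ≤ x) (ha : x ≤ a) :
    |x - (a + b) / 2| ≤ (a - b) / 2 :=
  abs_le.2 ⟨by linarith, by linarith⟩

lemma exists_isGreatest_abs_sub_midpoint_le {ι : Type*} [Finite ι] {f : ι → ℝ} {A B : ℝ}
    (hA : IsGreatest (Set.range f) A) (hB : IsLeast (Set.range f) B) :
    ∃ M, IsGreatest (Set.range fun i => |f i - (A + B) / 2|) M ∧ M ≤ (A - B) / 2 := by
  obtain ⟨i₀, -⟩ := hB.1
  have : Nonempty ι := ⟨i₀⟩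
  obtain ⟨j, hj⟩ := Finite.exists_max fun i => |f i - (A + B) / 2|
  refine ⟨_, ⟨⟨j, rfl⟩, ?_⟩, abs_sub_midpoint_le (hB.2 ⟨j, rfl⟩) (hA.2 ⟨j, rfl⟩)⟩
  rintro _ ⟨i, rfl⟩
  exact hj i

lemma mul_sub_lt_add_of_div_lt {A B C : ℝ} (hB : 0 < B) (hC : 1 < C)
    (h : A / B < (C + 1) / (C - 1)) : C * (A - B) < A + B := by
  rw [div_lt_div_iff₀ hB (by linarith)] at h
  linarith

theorem stmt12_general (d n N : ℕ)
    (p : (Fin d → ℝ) → ℝ) (hp : IsTrigPoly d n (fun θ => (p θ : ℂ)))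
    (A B : ℝ)
    (hA : IsGreatest (Set.range fun k : Fin d → Fin N => p (trigGrid N k)) A)
    (hB : IsLeast (Set.range fun k : Fin d → Fin N => p (trigGrid N k)) B)
    (C : ℝ) (hC1 : 1 < C)
    (hC : ∀ q : (Fin d → ℝ) → ℝ, IsTrigPoly d n (fun θ => (q θ : ℂ)) →
      ∀ Mq : ℝ, IsGreatest (Set.range fun k : Fin d → Fin N => |q (trigGrid N k)|) Mq →
      ∀ θ : Fin d → ℝ, |q θ| ≤ C * Mq)
    (hpos : ∀ k : Fin d → Fin N, 0 < p (trigGrid N k))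
    (hratio : A / B < (C + 1) / (C - 1)) :
    ∀ θ : Fin d → ℝ, 0 < p θ := by
  intro θ
  have hBpos : 0 < B := by
    obtain ⟨k, hk⟩ := hB.1
    exact hk ▸ hpos k
  have hgap := mul_sub_lt_add_of_div_lt hBpos hC1 hratio
  obtain ⟨M, hM, hMle⟩ := exists_isGreatest_abs_sub_midpoint_le hA hB
  have hdev : |p θ - (A + B) / 2| ≤ C * M :=
    hC (fun θ => p θ - (A + B) / 2) (hp.sub_const _) M hM θ
  have hCM : C * M ≤ C * ((A - B) / 2) := by gcongr
  linarith [(abs_le.1 hdev).1]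

theorem stmt12 (d n N : ℕ) (hd : 1 ≤ d) (hN : 2 * n + 1 ≤ N)
    (p : (Fin d → ℝ) → ℝ) (hp : IsTrigPoly d n (fun θ => (p θ : ℂ)))
    (A B : ℝ)
    (hA : IsGreatest (Set.range fun k : Fin d → Fin N => p (trigGrid N k)) A)
    (hB : IsLeast (Set.range fun k : Fin d → Fin N => p (trigGrid N k)) B)
    (C : ℝ) (hC1 : 1 < C)
    (hC : ∀ q : (Fin d → ℝ) → ℝ, IsTrigPoly d n (fun θ => (q θ : ℂ)) →
      ∀ Mq : ℝ, IsGreatest (Set.range fun k : Fin d → Fin N => |q (trigGrid N k)|) Mq →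
      ∀ θ : Fin d → ℝ, |q θ| ≤ C * Mq)
    (hpos : ∀ k : Fin d → Fin N, 0 < p (trigGrid N k))
    (hratio : A / B < (C + 1) / (C - 1)) :
    ∀ θ : Fin d → ℝ, 0 < p θ :=
  stmt12_general d n N p hp A B hA hB C hC1 hC hpos hratio
end
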